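/- Let 1 ≤ k ≤ K and let λ₁ ≥ λ₂ ≥ … ≥ λ_{K+1} > 0 be positive reals. Suppose there are constants c ∈ (0,1] and δ > 0 with λⱼ ∈ [c, 1] for all j ≤ k, λⱼ ≤ δ for all j > k, and 2δ/c < min(1/2, c). Then for every j ∈ {1,…,K} with j ≠ k, λ_k/λ_{k+1} > λⱼ/λ_{j+1}; hence k is the unique maximizer over {1,…,K} of the eigenvalue ratio j ↦ λⱼ/λ_{j+1}. -/
import Mathlib


/-- Deterministic core of the eigenvalue-ratio method, with regularized eigenvalues
`λ̃ⱼ = λⱼ + δ`: if `λ₁ ≥ … ≥ λ_{K+1} > 0`, `λⱼ ∈ [c,1]` for `j ≤ k`, `λⱼ ≤ δ` for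
`j > k`, and `2δ/c < min(1/2, c)`, then the ratio `(λⱼ+δ)/(λ_{j+1}+δ)` is strictly
maximized over `j ∈ {1,…,K}` exactly at `j = k`. -/
theorem stmt12 (K k : ℕ) (hk1 : 1 ≤ k) (hkK : k ≤ K) (lam : ℕ → ℝ) (c δ : ℝ)
    (hc : 0 < c) (hc1 : c ≤ 1) (hδ : 0 < δ)
    (hpos : ∀ j, 1 ≤ j → j ≤ K + 1 → 0 < lam j)
    (hmono : ∀ i j, 1 ≤ i → i ≤ j → j ≤ K + 1 → lam j ≤ lam i)
    (hhead : ∀ j, 1 ≤ j → j ≤ k → c ≤ lam j ∧ lam j ≤ 1)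
    (htail : ∀ j, k < j → j ≤ K + 1 → lam j ≤ δ)
    (hgap : 2 * δ / c < min (1 / 2) c) :
    ∀ j, 1 ≤ j → j ≤ K → j ≠ k →
      (lam j + δ) / (lam (j + 1) + δ) < (lam k + δ) / (lam (k + 1) + δ) := by
  intro j hj1 hjK hjk
  have h1 : 2 * δ / c < 1 / 2 := lt_of_lt_of_le hgap (min_le_left _ _)
  have h2 : 2 * δ / c < c := lt_of_lt_of_le hgap (min_le_right _ _)
  have h4 : 4 * δ < c := by
    have := (div_lt_iff₀ hc).mp h1; nlinarith
  have h5 : 2 * δ < c ^ 2 := by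
    have := (div_lt_iff₀ hc).mp h2; nlinarith
  -- bounds for the target ratio at k
  have hkA : c ≤ lam k := (hhead k hk1 le_rfl).1
  have hkB : lam (k + 1) ≤ δ := htail (k + 1) (by omega) (by omega)
  have htarget : (c + δ) / (2 * δ) ≤ (lam k + δ) / (lam (k + 1) + δ) := by
    apply div_le_div₀ (by linarith [hpos k hk1 (by omega)]) (by linarith)
      (by linarith [hpos (k+1) (by omega) (by omega)]) (by linarith)
  rcases lt_or_gt_of_ne hjk with hlt | hgt
  · -- j < k : ratio ≤ (1+δ)/(c+δ)
    have hup : lam j ≤ 1 := (hhead j hj1 (le_of_lt hlt)).2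
    have hlo : c ≤ lam (j + 1) := (hhead (j+1) (by omega) (by omega)).1
    have hb : (lam j + δ) / (lam (j + 1) + δ) ≤ (1 + δ) / (c + δ) := by
      apply div_le_div₀ (by linarith) (by linarith) (by linarith) (by linarith)
    have : (1 + δ) / (c + δ) < (c + δ) / (2 * δ) := by
      rw [div_lt_div_iff₀ (by linarith) (by linarith)]
      nlinarith [sq_nonneg δ, sq_nonneg c]
    linarith
  · -- j > k : ratio < 2
    have hup : lam j ≤ δ := htail j hgt (by omega)
    have hlo : 0 < lam (j + 1) := hpos (j+1) (by omega) (by omega)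
    have hb : (lam j + δ) / (lam (j + 1) + δ) < 2 := by
      rw [div_lt_iff₀ (by linarith)]; linarith
    have : (2 : ℝ) < (c + δ) / (2 * δ) := by
      rw [lt_div_iff₀ (by linarith)]; linarith
    linarith
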